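/- In the Birget–Rhodes expansion Γ(G), for every g,h ∈ G the principal ideals ⟨Π(g)Π(h)⟩, ⟨Π(h)Π(h⁻¹g⁻¹)⟩, and ⟨Π(h⁻¹)Π(g⁻¹)⟩ coincide. -/

import Mathlib

/-- The Birget–Rhodes expansion of a group `G`: pairs `(R, g)` where `R` is a
finite subset of `G` containing `1` and `g`. -/
def BR (G : Type*) [Group G] [DecidableEq G] : Type _ :=
  {p : Finset G × G // (1 : G) ∈ p.1 ∧ p.2 ∈ p.1}

variable {G : Type*} [Group G] [DecidableEq G]

/-- Multiplication `(R,g)·(S,h) = (R ∪ gS, gh)`. -/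
instance : Mul (BR G) :=
  ⟨fun x y =>
    ⟨(x.1.1 ∪ y.1.1.image (x.1.2 * ·), x.1.2 * y.1.2),
      Finset.mem_union_left _ x.2.1,
      Finset.mem_union_right _ (Finset.mem_image_of_mem _ y.2.2)⟩⟩

/-- The universal map `Π(g) = ({1,g}, g)`. -/
def BRpi (g : G) : BR G :=
  ⟨({1, g}, g), Finset.mem_insert_self _ _,
    Finset.mem_insert_of_mem (Finset.mem_singleton_self _)⟩


/-- The principal two-sided ideal generated by `s`:
`⟨s⟩ = {s} ∪ sΓ(G) ∪ Γ(G)s ∪ Γ(G)sΓ(G)`. -/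
def princ (s : BR G) : Set (BR G) :=
  {t | t = s ∨ (∃ a, t = s * a) ∨ (∃ a, t = a * s) ∨ ∃ a b, t = a * s * b}

/-!
The principal ideal of `(R, g) ∈ Γ(G)` only depends on `R` up to translation by `R⁻¹`: for
`x ∈ R`, left multiplication by `Π(x⁻¹)` turns `(R, g)` into `(x⁻¹R, x⁻¹g)`, and right
multiplication by a suitable `Π(k)` moves the group coordinate to any point of `x⁻¹R`; the
same moves with `x⁻¹` lead back. The three products in question have sets `{1, g, gh}`,
`g⁻¹{1, g, gh}` and `(gh)⁻¹{1, g, gh}`.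
-/

namespace BR

@[ext]
lemma ext {x y : BR G} (h₁ : x.1.1 = y.1.1) (h₂ : x.1.2 = y.1.2) : x = y :=
  Subtype.ext (Prod.ext h₁ h₂)

lemma fst_mul (x y : BR G) : (x * y).1.1 = x.1.1 ∪ y.1.1.image (x.1.2 * ·) := rfl

lemma snd_mul (x y : BR G) : (x * y).1.2 = x.1.2 * y.1.2 := rfl

instance : Semigroup (BR G) where
  mul_assoc x y z := by
    ext1
    · rw [fst_mul, fst_mul, fst_mul, fst_mul, Finset.image_union, Finset.image_image,
        Finset.union_assoc]
      simp [Function.comp_def, snd_mul, mul_assoc]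
    · simp [snd_mul, mul_assoc]

lemma mem_princ_iff {s t : BR G} :
    t ∈ princ s ↔ ∃ a b : WithOne (BR G), (t : WithOne (BR G)) = a * s * b := by
  constructor
  · rintro (rfl | ⟨b, rfl⟩ | ⟨a, rfl⟩ | ⟨a, b, rfl⟩)
    exacts [⟨1, 1, by simp⟩, ⟨1, b, by simp⟩, ⟨a, 1, by simp⟩, ⟨a, b, by simp⟩]
  · rintro ⟨a, b, hts⟩
    -- `none` and `some a` are `1` and `↑a`, so `hts` is definitionally an equation of coercions
    rcases a with _ | a <;> rcases b with _ | b <;> replace hts := WithOne.coe_injective hts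
    exacts [.inl hts, .inr (.inl ⟨_, hts⟩), .inr (.inr (.inl ⟨_, hts⟩)),
      .inr (.inr (.inr ⟨_, _, hts⟩))]

lemma princ_subset_of_mem {s t : BR G} (ht : t ∈ princ s) : princ t ⊆ princ s := by
  obtain ⟨a, b, ht⟩ := mem_princ_iff.1 ht
  intro u hu
  obtain ⟨c, d, hu⟩ := mem_princ_iff.1 hu
  exact mem_princ_iff.2 ⟨c * a, b * d, by rw [hu, ht]; simp only [mul_assoc]⟩

lemma fst_BRpi (g : G) : (BRpi g).1 = ({1, g}, g) := rfl

lemma fst_BRpi_mul_BRpi (g h : G) : (BRpi g * BRpi h).1.1 = {1, g, g * h} := by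
  ext a; simp [fst_mul, fst_BRpi]

lemma fst_BRpi_inv_mul {s : BR G} {x : G} (hx : x ∈ s.1.1) :
    (BRpi x⁻¹ * s).1.1 = s.1.1.image (x⁻¹ * ·) := by
  have h₁ : x⁻¹ ∈ s.1.1.image (x⁻¹ * ·) := Finset.mem_image.2 ⟨1, s.2.1, mul_one _⟩
  have h₂ : 1 ∈ s.1.1.image (x⁻¹ * ·) := Finset.mem_image.2 ⟨x, hx, inv_mul_cancel _⟩
  exact Finset.union_eq_right.2 (Finset.insert_subset h₂ (Finset.singleton_subset_iff.2 h₁))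

lemma fst_mul_BRpi {s : BR G} {k : G} (hk : s.1.2 * k ∈ s.1.1) : (s * BRpi k).1.1 = s.1.1 := by
  simp [fst_mul, fst_BRpi, s.2.2, hk]

lemma mem_princ_of_fst_eq_image {s t : BR G} {x : G} (hx : x ∈ s.1.1)
    (ht : t.1.1 = s.1.1.image (x⁻¹ * ·)) : t ∈ princ s := by
  set k := s.1.2⁻¹ * x * t.1.2
  have hk : (BRpi x⁻¹ * s).1.2 * k = t.1.2 := by simp [k, snd_mul, fst_BRpi, mul_assoc]
  refine .inr (.inr (.inr ⟨BRpi x⁻¹, BRpi k, ?_⟩))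
  ext1
  · rw [fst_mul_BRpi (hk ▸ fst_BRpi_inv_mul hx ▸ ht ▸ t.2.2), fst_BRpi_inv_mul hx, ht]
  · exact hk.symm

lemma princ_eq_of_fst_eq_image {s t : BR G} {x : G} (hx : x ∈ s.1.1)
    (ht : t.1.1 = s.1.1.image (x⁻¹ * ·)) : princ t = princ s := by
  have hs : s.1.1 = t.1.1.image (x⁻¹⁻¹ * ·) := by
    rw [ht, Finset.image_image]
    simp [Function.comp_def]
  have hx' : x⁻¹ ∈ t.1.1 := ht ▸ Finset.mem_image.2 ⟨1, s.2.1, mul_one _⟩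
  exact (princ_subset_of_mem (mem_princ_of_fst_eq_image hx ht)).antisymm
    (princ_subset_of_mem (mem_princ_of_fst_eq_image hx' hs))

end BR

/-- `⟨Π(g)Π(h)⟩ = ⟨Π(h)Π(h⁻¹g⁻¹)⟩ = ⟨Π(h⁻¹)Π(g⁻¹)⟩`. -/
theorem princ_pi_two (g h : G) :
    princ (BRpi g * BRpi h) = princ (BRpi h * BRpi (h⁻¹ * g⁻¹)) ∧
    princ (BRpi h * BRpi (h⁻¹ * g⁻¹)) = princ (BRpi h⁻¹ * BRpi g⁻¹) := by
  have h₁ : princ (BRpi h * BRpi (h⁻¹ * g⁻¹)) = princ (BRpi g * BRpi h) := by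
    refine BR.princ_eq_of_fst_eq_image (x := g) (by simp [BR.fst_BRpi_mul_BRpi]) ?_
    ext a; simp [BR.fst_BRpi_mul_BRpi]; tauto
  have h₂ : princ (BRpi h⁻¹ * BRpi g⁻¹) = princ (BRpi g * BRpi h) := by
    refine BR.princ_eq_of_fst_eq_image (x := g * h) (by simp [BR.fst_BRpi_mul_BRpi]) ?_
    ext a; simp [BR.fst_BRpi_mul_BRpi]; tauto
  exact ⟨h₁.symm, h₁.trans h₂.symm⟩
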